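/- For all natural numbers j ≥ 1 and p ≥ 1, the series ∑_{r=p}^∞ arctan( √5·L_{2j−1}²·F_{(4j−2)r+2j−1} / L_{(4j−2)r+2j−1}² ) converges and its sum equals arctan( (1/√5)·L_{2j−1} / F_{(4j−2)p} ). -/

import Mathlib

/-!
With `m = 2j - 1`, `x_k = L_m / (√5 F_k)` and `k` even, the two identities
`F_{k+2m} = F_k + L_m F_{k+m}` and `5 F_k F_{k+2m} + L_m² = L_{k+m}²` turn the subtraction formula
for `arctan` into `arctan x_k - arctan x_{k+2m} = arctan (√5 L_m² F_{k+m} / L_{k+m}²)`.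
The series therefore telescopes along `k = 2mp, 2m(p+1), …`, and `x_k → 0`.
-/

def lucas : ℕ → ℕ
  | 0 => 2
  | 1 => 1
  | n + 2 => lucas (n + 1) + lucas n

open Real Filter Topology
open scoped goldenRatio

lemma lucas_pos : ∀ n, 0 < lucas n
  | 0 => by decide
  | 1 => by decide
  | n + 2 => Nat.add_pos_left (lucas_pos (n + 1)) _

lemma coe_lucas_eq : ∀ n, (lucas n : ℝ) = φ ^ n + ψ ^ n
  | 0 => by norm_num [lucas]
  | 1 => by simp [lucas, goldenRatio_add_goldenConj]
  | n + 2 => by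
    rw [lucas, Nat.cast_add, coe_lucas_eq (n + 1), coe_lucas_eq n, pow_add φ n 2, pow_add ψ n 2,
      goldenRatio_sq, goldenConj_sq]
    ring

lemma goldenRatio_pow_mul_goldenConj_pow (n : ℕ) : φ ^ n * ψ ^ n = (-1) ^ n := by
  rw [← mul_pow, goldenRatio_mul_goldenConj]

lemma fib_add_two_mul_of_odd {m : ℕ} (hm : Odd m) (k : ℕ) :
    Nat.fib (k + 2 * m) = Nat.fib k + lucas m * Nat.fib (k + m) := by
  have hmm := goldenRatio_pow_mul_goldenConj_pow m
  rw [hm.neg_one_pow] at hmm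
  suffices h : (Nat.fib (k + 2 * m) : ℝ) = Nat.fib k + lucas m * Nat.fib (k + m) by
    exact_mod_cast h
  simp only [coe_fib_eq, coe_lucas_eq, pow_add, pow_mul']
  field_simp
  linear_combination (ψ ^ k - φ ^ k) * hmm

lemma five_mul_fib_mul_fib_add_two_mul_add_lucas_sq {k : ℕ} (hk : Even k) (m : ℕ) :
    5 * Nat.fib k * Nat.fib (k + 2 * m) + lucas m ^ 2 = lucas (k + m) ^ 2 := by
  have hkk := goldenRatio_pow_mul_goldenConj_pow k
  rw [hk.neg_one_pow] at hkk
  have h5 : √5 ^ 2 = 5 := sq_sqrt (by norm_num)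
  suffices h : 5 * (Nat.fib k : ℝ) * Nat.fib (k + 2 * m) + (lucas m : ℝ) ^ 2
      = (lucas (k + m) : ℝ) ^ 2 by
    exact_mod_cast h
  simp only [coe_fib_eq, coe_lucas_eq, pow_add, pow_mul']
  field_simp
  linear_combination (-5) * (φ ^ m + ψ ^ m) ^ 2 * hkk
    - ((φ ^ k * φ ^ m + ψ ^ k * ψ ^ m) ^ 2 - (φ ^ m + ψ ^ m) ^ 2) * h5

lemma arctan_sub_arctan_of_nonneg {x y : ℝ} (hx : 0 ≤ x) (hy : 0 ≤ y) :
    arctan x - arctan y = arctan ((x - y) / (1 + x * y)) := by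
  have hxy : 0 < 1 + x * y := by positivity
  have hden : 1 - y * ((x - y) / (1 + x * y)) = (1 + y ^ 2) / (1 + x * y) := by
    field_simp; ring
  have hnum : y + (x - y) / (1 + x * y) = x * (1 + y ^ 2) / (1 + x * y) := by
    field_simp; ring
  have hlt : y * ((x - y) / (1 + x * y)) < 1 := by
    have : 0 < (1 + y ^ 2) / (1 + x * y) := by positivity
    linarith
  rw [sub_eq_iff_eq_add', arctan_add hlt, hnum, hden, div_div_div_cancel_right₀ hxy.ne',
    mul_div_cancel_right₀ _ (by positivity)]

lemma arctan_lucas_div_fib_sub {m k : ℕ} (hm : Odd m) (hk : Even k) (hk0 : 0 < k) :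
    arctan (1 / √5 * lucas m / Nat.fib k) - arctan (1 / √5 * lucas m / Nat.fib (k + 2 * m))
      = arctan (√5 * (lucas m : ℝ) ^ 2 * Nat.fib (k + m) / (lucas (k + m) : ℝ) ^ 2) := by
  have hF : (0 : ℝ) < Nat.fib k := by exact_mod_cast Nat.fib_pos.2 hk0
  have hF' : (0 : ℝ) < Nat.fib (k + 2 * m) := by exact_mod_cast Nat.fib_pos.2 (by omega)
  have hN : (0 : ℝ) < lucas (k + m) := by exact_mod_cast lucas_pos _
  have h5 : √5 ^ 2 = 5 := sq_sqrt (by norm_num)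
  have hdiff : (Nat.fib (k + 2 * m) : ℝ) = Nat.fib k + lucas m * Nat.fib (k + m) := by
    exact_mod_cast fib_add_two_mul_of_odd hm k
  have hsq : 5 * (Nat.fib k : ℝ) * Nat.fib (k + 2 * m) + (lucas m : ℝ) ^ 2
      = (lucas (k + m) : ℝ) ^ 2 := by
    exact_mod_cast five_mul_fib_mul_fib_add_two_mul_add_lucas_sq hk m
  rw [arctan_sub_arctan_of_nonneg (by positivity) (by positivity)]
  congr 1
  rw [div_eq_div_iff (by positivity) (by positivity)]
  field_simp
  linear_combination (lucas m * lucas (k + m) ^ 2 : ℝ) * hdiff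
    - lucas m ^ 2 * Nat.fib (k + m) * Nat.fib k * Nat.fib (k + 2 * m) * h5
    - lucas m ^ 2 * Nat.fib (k + m) * hsq

lemma hasSum_sub_succ_of_antitone {a : ℕ → ℝ} {l : ℝ} (ha : Antitone a)
    (hl : Tendsto a atTop (𝓝 l)) : HasSum (fun n ↦ a n - a (n + 1)) (a 0 - l) := by
  rw [hasSum_iff_tendsto_nat_of_nonneg fun n ↦ sub_nonneg.2 (ha n.le_succ)]
  simp only [Finset.sum_range_sub']
  exact tendsto_const_nhds.sub hl

lemma tendsto_fib_atTop : Tendsto Nat.fib atTop atTop :=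
  (tendsto_add_atTop_iff_nat 2).1 Nat.fib_add_two_strictMono.tendsto_atTop

theorem hasSum_arctan_lucas_sq {m p : ℕ} (hm : Odd m) (hp : 1 ≤ p) :
    HasSum (fun r : ℕ ↦ arctan (√5 * (lucas m : ℝ) ^ 2 * Nat.fib (2 * m * (p + r) + m) /
        (lucas (2 * m * (p + r) + m) : ℝ) ^ 2))
      (arctan (1 / √5 * lucas m / Nat.fib (2 * m * p))) := by
  set a : ℕ → ℝ := fun r ↦ arctan (1 / √5 * lucas m / Nat.fib (2 * m * (p + r)))
  have hstep (r : ℕ) : a r - a (r + 1) = arctan (√5 * (lucas m : ℝ) ^ 2 *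
      Nat.fib (2 * m * (p + r) + m) / (lucas (2 * m * (p + r) + m) : ℝ) ^ 2) := by
    rw [← arctan_lucas_div_fib_sub hm ⟨m * (p + r), by ring⟩ (by have := hm.pos; positivity)]
    simp only [a, show 2 * m * (p + (r + 1)) = 2 * m * (p + r) + 2 * m by ring]
  have hanti : Antitone a := antitone_nat_of_succ_le fun r ↦ by
    rw [← sub_nonneg, hstep]
    positivity
  have hfib : Tendsto (fun r ↦ (Nat.fib (2 * m * (p + r)) : ℝ)) atTop atTop :=
    tendsto_natCast_atTop_atTop.comp <| tendsto_fib_atTop.comp <|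
      tendsto_atTop_mono (fun r ↦ show r ≤ 2 * m * (p + r) by nlinarith [hm.pos]) tendsto_id
  have hlim : Tendsto a atTop (𝓝 0) := by
    rw [← arctan_zero]
    exact (continuous_arctan.tendsto 0).comp (tendsto_const_nhds.div_atTop hfib)
  convert hasSum_sub_succ_of_antitone hanti hlim using 1
  · exact (funext hstep).symm
  · simp only [a, add_zero, sub_zero]

theorem stmt15 (j p : ℕ) (hj : 1 ≤ j) (hp : 1 ≤ p) :
    HasSum (fun r : ℕ =>
        Real.arctan (Real.sqrt 5 * (lucas (2 * j - 1) : ℝ) ^ 2 *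
            (Nat.fib ((4 * j - 2) * (p + r) + 2 * j - 1) : ℝ) /
          (lucas ((4 * j - 2) * (p + r) + 2 * j - 1) : ℝ) ^ 2))
      (Real.arctan ((1 / Real.sqrt 5) * (lucas (2 * j - 1) : ℝ) /
        (Nat.fib ((4 * j - 2) * p) : ℝ))) := by
  have hm : Odd (2 * j - 1) := ⟨j - 1, by omega⟩
  have h4 : 4 * j - 2 = 2 * (2 * j - 1) := by omega
  have hidx (n : ℕ) : n + 2 * j - 1 = n + (2 * j - 1) := by omega
  simp only [h4, hidx]
  exact hasSum_arctan_lucas_sq hm hp
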